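/- arXiv:2512.04411 — 3 statements merged into one kernel-verified Lean document; each statement's English description precedes it below -/
import Mathlib

section
/- Let H be a real inner product space and α > 0 a real number. Given e₁, e₂, g₁₂, g₂₁ ∈ H, define the updated transmission data g₁₂' = 2α·e₂ − g₂₁ and g₂₁' = 2α·e₁ − g₁₂. Then (1/α)(‖g₁₂'‖² + ‖g₂₁'‖²) = (1/α)(‖g₁₂‖² + ‖g₂₁‖²) − 4[⟨g₁₂ − α·e₁, e₁⟩ + ⟨g₂₁ − α·e₂, e₂⟩]. -/
open scoped RealInnerProductSpace

theorem norm_two_smul_sub_sq_eq {H : Type*} [NormedAddCommGroup H] [InnerProductSpace ℝ H]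
    (α : ℝ) (e g : H) :
    ‖(2 * α) • e - g‖ ^ 2 = ‖g‖ ^ 2 - 4 * α * ⟪g - α • e, e⟫ := by
  rw [norm_sub_sq_real, norm_smul, inner_smul_left, inner_sub_left, inner_smul_left,
    real_inner_self_eq_norm_sq, real_inner_comm, Real.norm_eq_abs, mul_pow, sq_abs]
  simp only [conj_trivial]
  ring

/-- Abstract form of Lemma 4.2: the energy identity for one step of the Robin
transmission update. -/
theorem robin_update_energy_identity {H : Type*} [NormedAddCommGroup H]
    [InnerProductSpace ℝ H] (α : ℝ) (hα : 0 < α) (e₁ e₂ g₁₂ g₂₁ : H)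
    (g₁₂' g₂₁' : H)
    (h₁₂ : g₁₂' = (2 * α) • e₂ - g₂₁) (h₂₁ : g₂₁' = (2 * α) • e₁ - g₁₂) :
    (1 / α) * (‖g₁₂'‖ ^ 2 + ‖g₂₁'‖ ^ 2)
      = (1 / α) * (‖g₁₂‖ ^ 2 + ‖g₂₁‖ ^ 2)
        - 4 * (⟪g₁₂ - α • e₁, e₁⟫ + ⟪g₂₁ - α • e₂, e₂⟫) := by
  rw [h₁₂, h₂₁, norm_two_smul_sub_sq_eq, norm_two_smul_sub_sq_eq]
  field_simp [hα.ne']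
  ring
end

section
/- Let H be a real inner product space and α > 0. Let e₁, e₂, g₁₂, g₂₁ : ℕ → H and A₁, A₂, P : ℕ → ℝ be sequences such that for every n: (i) A₁(n) ≥ 0, A₂(n) ≥ 0, P(n) ≥ 0; (ii) A₁(n) = ⟨g₁₂(n) − α·e₁(n), e₁(n)⟩; (iii) A₂(n) + P(n) = ⟨g₂₁(n) − α·e₂(n), e₂(n)⟩; (iv) g₁₂(n+1) = 2α·e₂(n) − g₂₁(n) and g₂₁(n+1) = 2α·e₁(n) − g₁₂(n). Then A₁(n) + A₂(n) + P(n) → 0 as n → ∞. -/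
open Filter
open scoped RealInnerProductSpace

lemma key_norm_sq {H : Type*} [NormedAddCommGroup H] [InnerProductSpace ℝ H]
    (α : ℝ) (x g : H) :
    ‖(2 * α) • x - g‖ ^ 2 = ‖g‖ ^ 2 - 4 * α * ⟪g - α • x, x⟫ := by
  rw [norm_sub_sq_real, inner_sub_left, norm_smul, real_inner_smul_left,
    real_inner_smul_left, real_inner_comm x g, real_inner_self_eq_norm_sq]
  simp [mul_pow, abs_mul]
  ring

/-- Abstract form of Theorem 3.2: convergence of the iterative contact-resolving
hybrid method.  The energy error (including the penalty term) converges to zero. -/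
theorem iterative_method_convergence {H : Type*} [NormedAddCommGroup H]
    [InnerProductSpace ℝ H] (α : ℝ) (hα : 0 < α)
    (e₁ e₂ g₁₂ g₂₁ : ℕ → H) (A₁ A₂ P : ℕ → ℝ)
    (hA₁ : ∀ n, A₁ n ≥ 0) (hA₂ : ∀ n, A₂ n ≥ 0) (hP : ∀ n, P n ≥ 0)
    (hid₁ : ∀ n, A₁ n = ⟪g₁₂ n - α • e₁ n, e₁ n⟫)
    (hid₂ : ∀ n, A₂ n + P n = ⟪g₂₁ n - α • e₂ n, e₂ n⟫)
    (hupd₁ : ∀ n, g₁₂ (n + 1) = (2 * α) • e₂ n - g₂₁ n)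
    (hupd₂ : ∀ n, g₂₁ (n + 1) = (2 * α) • e₁ n - g₁₂ n) :
    Tendsto (fun n => A₁ n + A₂ n + P n) atTop (nhds 0) := by
  set S : ℕ → ℝ := fun n => A₁ n + A₂ n + P n with hS
  set E : ℕ → ℝ := fun n => ‖g₁₂ n‖ ^ 2 + ‖g₂₁ n‖ ^ 2 with hE
  have hSnn : ∀ n, 0 ≤ S n := fun n => by
    have := hA₁ n; have := hA₂ n; have := hP n; simp [hS]; linarith
  have hstep : ∀ n, E (n + 1) = E n - 4 * α * S n := by
    intro n
    have h1 : ‖g₁₂ (n + 1)‖ ^ 2 = ‖g₂₁ n‖ ^ 2 - 4 * α * (A₂ n + P n) := by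
      rw [hupd₁ n, key_norm_sq, hid₂ n]
    have h2 : ‖g₂₁ (n + 1)‖ ^ 2 = ‖g₁₂ n‖ ^ 2 - 4 * α * A₁ n := by
      rw [hupd₂ n, key_norm_sq, hid₁ n]
    simp only [hE, h1, h2, hS]; ring
  have hsum : ∀ n, 4 * α * (∑ k ∈ Finset.range n, S k) = E 0 - E n := by
    intro n
    induction n with
    | zero => simp
    | succ n ih =>
      rw [Finset.sum_range_succ, mul_add, ih, hstep n]; ring
  have hEnn : ∀ n, 0 ≤ E n := fun n => by positivity
  have hsummable : Summable S := by
    apply summable_of_sum_range_le hSnn (c := E 0 / (4 * α))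
    intro n
    rw [le_div_iff₀ (by positivity), mul_comm, hsum n]
    have := hEnn n; linarith
  exact hsummable.tendsto_atTop_zero
end

section
/- Under the hypotheses of the abstract convergence setting — H a real inner product space, α > 0, sequences e₁, e₂, g₁₂, g₂₁ : ℕ → H and A₁, A₂, P : ℕ → ℝ with A₁(n), A₂(n), P(n) ≥ 0, A₁(n) = ⟨g₁₂(n) − α·e₁(n), e₁(n)⟩, A₂(n) + P(n) = ⟨g₂₁(n) − α·e₂(n), e₂(n)⟩, and updates g₁₂(n+1) = 2α·e₂(n) − g₂₁(n), g₂₁(n+1) = 2α·e₁(n) − g₁₂(n) — one has for every natural number M: ∑_{n=0}^{M} (A₁(n) + A₂(n) + P(n)) ≤ (1/(4α)) (‖g₁₂(0)‖² + ‖g₂₁(0)‖²). -/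
open scoped RealInnerProductSpace

/-! The Robin update `g ↦ 2α e - g` trades exactly `4α ⟪g - α e, e⟫` of the squared norm of the
transmission data, so the energy `‖g₁₂ n‖² + ‖g₂₁ n‖²` drops by `4α` times the dissipation
`A₁ n + A₂ n + P n` at every iteration. Telescoping and nonnegativity of the energy give the bound. -/

theorem norm_two_smul_sub_sq_add_inner {H : Type*} [NormedAddCommGroup H] [InnerProductSpace ℝ H]
    (α : ℝ) (e g : H) :
    ‖(2 * α) • e - g‖ ^ 2 + 4 * α * ⟪g - α • e, e⟫ = ‖g‖ ^ 2 := by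
  rw [norm_sub_sq_real, inner_sub_left, real_inner_smul_left, real_inner_smul_left,
    real_inner_self_eq_norm_sq, norm_smul, Real.norm_eq_abs, mul_pow, sq_abs,
    real_inner_comm e g]
  ring

theorem Finset.sum_range_le_div_of_add_mul_le {S d : ℕ → ℝ} {c : ℝ} (hc : 0 < c)
    (hS : ∀ n, 0 ≤ S n) (h : ∀ n, S (n + 1) + c * d n ≤ S n) (N : ℕ) :
    ∑ n ∈ Finset.range N, d n ≤ S 0 / c := by
  rw [le_div_iff₀ hc]
  calc (∑ n ∈ Finset.range N, d n) * c
      ≤ ∑ n ∈ Finset.range N, (S n - S (n + 1)) := by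
        rw [Finset.sum_mul]
        exact Finset.sum_le_sum fun n _ => by linarith [h n]
    _ = S 0 - S N := Finset.sum_range_sub' S N
    _ ≤ S 0 := sub_le_self _ (hS N)

theorem iterative_method_partial_sum_bound_general {H : Type*} [NormedAddCommGroup H]
    [InnerProductSpace ℝ H] (α : ℝ) (hα : 0 < α)
    (e₁ e₂ g₁₂ g₂₁ : ℕ → H) (A₁ A₂ P : ℕ → ℝ)
    (hid₁ : ∀ n, A₁ n = ⟪g₁₂ n - α • e₁ n, e₁ n⟫)
    (hid₂ : ∀ n, A₂ n + P n = ⟪g₂₁ n - α • e₂ n, e₂ n⟫)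
    (hupd₁ : ∀ n, g₁₂ (n + 1) = (2 * α) • e₂ n - g₂₁ n)
    (hupd₂ : ∀ n, g₂₁ (n + 1) = (2 * α) • e₁ n - g₁₂ n) :
    ∀ M : ℕ, ∑ n ∈ Finset.range (M + 1), (A₁ n + A₂ n + P n)
      ≤ (1 / (4 * α)) * (‖g₁₂ 0‖ ^ 2 + ‖g₂₁ 0‖ ^ 2) := by
  have energy_step : ∀ n, (‖g₁₂ (n + 1)‖ ^ 2 + ‖g₂₁ (n + 1)‖ ^ 2)
      + 4 * α * (A₁ n + A₂ n + P n) ≤ ‖g₁₂ n‖ ^ 2 + ‖g₂₁ n‖ ^ 2 := by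
    intro n
    have h₁ := norm_two_smul_sub_sq_add_inner α (e₁ n) (g₁₂ n)
    have h₂ := norm_two_smul_sub_sq_add_inner α (e₂ n) (g₂₁ n)
    rw [hupd₁, hupd₂, add_assoc (A₁ n), hid₁, hid₂]
    linarith
  intro M
  rw [one_div_mul_eq_div]
  exact Finset.sum_range_le_div_of_add_mul_le (S := fun n => ‖g₁₂ n‖ ^ 2 + ‖g₂₁ n‖ ^ 2)
    (by positivity) (fun n => by positivity) energy_step (M + 1)

/-- Uniform partial-sum bound (4.7) in the proof of Theorem 3.2: the total dissipation
over all iterations is controlled by the initial transmission-data norm. -/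
theorem iterative_method_partial_sum_bound {H : Type*} [NormedAddCommGroup H]
    [InnerProductSpace ℝ H] (α : ℝ) (hα : 0 < α)
    (e₁ e₂ g₁₂ g₂₁ : ℕ → H) (A₁ A₂ P : ℕ → ℝ)
    (hA₁ : ∀ n, A₁ n ≥ 0) (hA₂ : ∀ n, A₂ n ≥ 0) (hP : ∀ n, P n ≥ 0)
    (hid₁ : ∀ n, A₁ n = ⟪g₁₂ n - α • e₁ n, e₁ n⟫)
    (hid₂ : ∀ n, A₂ n + P n = ⟪g₂₁ n - α • e₂ n, e₂ n⟫)
    (hupd₁ : ∀ n, g₁₂ (n + 1) = (2 * α) • e₂ n - g₂₁ n)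
    (hupd₂ : ∀ n, g₂₁ (n + 1) = (2 * α) • e₁ n - g₁₂ n) :
    ∀ M : ℕ, ∑ n ∈ Finset.range (M + 1), (A₁ n + A₂ n + P n)
      ≤ (1 / (4 * α)) * (‖g₁₂ 0‖ ^ 2 + ‖g₂₁ 0‖ ^ 2) :=
  iterative_method_partial_sum_bound_general α hα e₁ e₂ g₁₂ g₂₁ A₁ A₂ P hid₁ hid₂ hupd₁ hupd₂
end
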